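/- arXiv:1203.4393 — 2 statements merged into one kernel-verified Lean document; each statement's English description precedes it below -/
import Mathlib

section
/- For every k ≥ 1, if x_1,...,x_k are chosen independently and uniformly at random from the 16 vertices of the Clebsch graph L, the probability that {x_1,...,x_k} induces no edge of L equals (5·5^{k-1} + 10·4^{k-1} − 30·3^{k-1} + 20·2^{k-1} − 4)/16^{k-1}. -/
/-- Vertices of the Clebsch graph: binary 5-sequences with an even number of ones. -/
abbrev ClebschVert : Type := {v : Fin 5 → ZMod 2 // ∑ i, v i = 0}

/-- The Clebsch graph: two vertices are adjacent iff their termwise mod-2 sum has weight 4,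
i.e. they differ in exactly four coordinates. -/
def Clebsch : SimpleGraph ClebschVert where
  Adj x y := hammingDist x.1 y.1 = 4
  symm := ⟨fun x y h => by simpa [hammingDist_comm] using h⟩
  loopless := ⟨fun x h => by simp [hammingDist_self] at h⟩

instance : DecidableRel Clebsch.Adj := fun _ _ => Nat.decEq _ _

/-- A concrete vertex of the Clebsch graph. -/
def cv (a b c d e : ZMod 2) (h : a + b + c + d + e = 0 := by decide) : ClebschVert :=
  ⟨![a, b, c, d, e], by simp [Fin.sum_univ_five]; linear_combination h⟩

/-!
For a finite set `S` of vertices let `N_m(S)` count the `m`-tuples `y` such that `S` together with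
the entries of `y` is independent. Splitting off the first entry gives
`N_{m+1}(S) = |S| N_m(S) + ∑ N_m(S ∪ {v})`, the sum over the vertices `v ∉ S` adjacent to no vertex
of `S`; and `N_m(S) = c^m` as soon as the `c` vertices adjacent to nothing in `S` form an
independent set themselves, which happens when `c ≤ |S| + 1`.

The vertices form a subgroup of `(ℤ/2)^5` whose translations are automorphisms, so the number of
good `(m+1)`-tuples is `16 N_m({0})`. Starting from `{0}`, a finite computation shows that an independent
set of size `1`, `2`, `3` has `10`, `6`, `3` extensions, and that the extensions of an independent
triple leave `4`, `5`, `5` compatible vertices. The recursion then solves to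
`N_m = 5^m + 4^m - 3^m` on triples, `2·5^m + 3·4^m - 6·3^m + 2·2^m` on pairs and
`5·5^m + 10·4^m - 30·3^m + 20·2^m - 4` on `{0}`.
-/

open Finset

namespace SimpleGraph

variable {V W : Type*} {G : SimpleGraph V} {H : SimpleGraph W}

def nonAdjFinset [Fintype V] (G : SimpleGraph V) [DecidableRel G.Adj] (S : Finset V) :
    Finset V :=
  {v | ∀ s ∈ S, ¬G.Adj s v}

theorem mem_nonAdjFinset [Fintype V] [DecidableRel G.Adj] {S : Finset V} {v : V} :
    v ∈ G.nonAdjFinset S ↔ ∀ s ∈ S, ¬G.Adj s v := by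
  simp [nonAdjFinset]

theorem subset_nonAdjFinset [Fintype V] [DecidableRel G.Adj] {S : Finset V}
    (hS : G.IsIndepSet S) : S ⊆ G.nonAdjFinset S := fun _ ht =>
  mem_nonAdjFinset.2 fun _ hs hst => hS hs ht (G.ne_of_adj hst) hst

noncomputable def indepExtCount [DecidableEq V] (G : SimpleGraph V) (S : Finset V) (m : ℕ) : ℕ :=
  Nat.card {y : Fin m → V // G.IsIndepSet (↑S ∪ Set.range y)}

theorem Iso.isIndepSet_image (σ : G ≃g H) {A : Set V} :
    H.IsIndepSet (σ '' A) ↔ G.IsIndepSet A := by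
  rw [IsIndepSet, IsIndepSet, σ.injective.injOn.pairwise_image]
  unfold Function.onFun
  simp only [σ.map_adj_iff]

section indepExtCount

variable [DecidableEq V]

theorem indepExtCount_zero {S : Finset V} (hS : G.IsIndepSet S) : G.indepExtCount S 0 = 1 := by
  simp [indepExtCount, Set.range_eq_empty, hS]

theorem indepExtCount_eq_zero {S : Finset V} (hS : ¬G.IsIndepSet S) (m : ℕ) :
    G.indepExtCount S m = 0 := by
  rw [indepExtCount, Nat.card_eq_zero]
  exact Or.inl ⟨fun y => hS (y.2.mono Set.subset_union_left)⟩

theorem indepExtCount_succ [Fintype V] (S : Finset V) (m : ℕ) :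
    G.indepExtCount S (m + 1) = ∑ v, G.indepExtCount (insert v S) m := by
  have key (v : V) (y : Fin m → V) :
      ↑S ∪ Set.range (Fin.cons v y : Fin (m + 1) → V) = ↑(insert v S) ∪ Set.range y := by
    simp [Fin.range_cons, Set.union_insert, Set.insert_union]
  simp only [indepExtCount]
  rw [← Nat.card_sigma]
  exact Nat.card_congr (((Fin.consEquiv fun _ => V).subtypeEquiv fun p => by
    rw [← key]; rfl).symm.trans (Equiv.subtypeProdEquivSigmaSubtype _))

theorem indepExtCount_map [DecidableEq W] (σ : G ≃g H) (S : Finset V) (m : ℕ) :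
    H.indepExtCount (S.image σ) m = G.indepExtCount S m := by
  refine (Nat.card_congr ((Equiv.piCongrRight fun _ => σ.toEquiv).subtypeEquiv fun y => ?_)).symm
  rw [← σ.isIndepSet_image, Set.image_union, ← Set.range_comp, coe_image]
  rfl

theorem indepExtCount_empty_succ [Fintype V] {v₀ : V} (h : ∀ v, ∃ σ : G ≃g G, σ v₀ = v)
    (m : ℕ) : G.indepExtCount ∅ (m + 1) = Fintype.card V * G.indepExtCount {v₀} m := by
  rw [indepExtCount_succ, ← smul_eq_mul, ← card_univ, ← sum_const]
  refine sum_congr rfl fun v _ => ?_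
  obtain ⟨σ, rfl⟩ := h v
  rw [insert_empty, ← image_singleton, indepExtCount_map]

theorem card_filter_forall_not_adj [Fintype V] [DecidableRel G.Adj] (k : ℕ) :
    #{x : Fin k → V | ∀ a b, ¬G.Adj (x a) (x b)} = G.indepExtCount ∅ k := by
  rw [indepExtCount, ← Fintype.card_subtype, ← Nat.card_eq_fintype_card]
  refine Nat.card_congr (Equiv.subtypeEquivRight fun x => ?_)
  rw [coe_empty, Set.empty_union]
  constructor
  · rintro h _ ⟨a, rfl⟩ _ ⟨b, rfl⟩ -
    exact h a b
  · exact fun h a b hab => h ⟨a, rfl⟩ ⟨b, rfl⟩ (G.ne_of_adj hab) hab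

variable [Fintype V] [DecidableRel G.Adj] {S : Finset V} {v : V}

theorem IsIndepSet.insert_of_mem_nonAdjFinset (hS : G.IsIndepSet S)
    (hv : v ∈ G.nonAdjFinset S) : G.IsIndepSet ↑(insert v S) := by
  rw [coe_insert]
  exact hS.insert fun s hs _ => ⟨fun h => mem_nonAdjFinset.1 hv s hs h.symm,
    mem_nonAdjFinset.1 hv s hs⟩

theorem not_isIndepSet_insert (hv : v ∉ S) (hv' : v ∉ G.nonAdjFinset S) :
    ¬G.IsIndepSet ↑(insert v S) := by
  obtain ⟨s, hs, hsv⟩ : ∃ s ∈ S, G.Adj s v := by simpa [mem_nonAdjFinset] using hv'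
  rw [coe_insert]
  exact fun h => h (Set.mem_insert_of_mem _ hs) (Set.mem_insert _ _)
    (ne_of_mem_of_not_mem hs hv) hsv

theorem indepExtCount_succ_eq_sum_nonAdjFinset (S : Finset V) (m : ℕ) :
    G.indepExtCount S (m + 1) =
      #S * G.indepExtCount S m + ∑ v ∈ G.nonAdjFinset S \ S, G.indepExtCount (insert v S) m := by
  rw [indepExtCount_succ, ← sum_add_sum_compl S]
  congr 1
  · rw [← smul_eq_mul, ← sum_const]
    exact sum_congr rfl fun v hv => by rw [insert_eq_of_mem hv]
  · refine (sum_subset (fun v hv => ?_) fun v hv hv' => ?_).symm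
    · simp_all
    · exact indepExtCount_eq_zero (not_isIndepSet_insert (by simpa using hv) (by simp_all)) m

theorem isIndepSet_nonAdjFinset (hS : G.IsIndepSet S) (hC : #(G.nonAdjFinset S) ≤ #S + 1) :
    G.IsIndepSet ↑(G.nonAdjFinset S) := by
  have hle : #(G.nonAdjFinset S \ S) ≤ 1 := by
    rw [card_sdiff_of_subset (subset_nonAdjFinset hS)]; omega
  intro x hx y hy hxy
  by_cases hxS : x ∈ S
  · exact mem_nonAdjFinset.1 hy x hxS
  by_cases hyS : y ∈ S
  · exact fun h => mem_nonAdjFinset.1 hx y hyS h.symm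
  exact absurd (card_le_one.1 hle x (mem_sdiff.2 ⟨hx, hxS⟩) y (mem_sdiff.2 ⟨hy, hyS⟩)) hxy

theorem indepExtCount_eq_pow (hS : G.IsIndepSet S) (hC : G.IsIndepSet ↑(G.nonAdjFinset S))
    (m : ℕ) : G.indepExtCount S m = #(G.nonAdjFinset S) ^ m := by
  have key (y : Fin m → V) :
      G.IsIndepSet (↑S ∪ Set.range y) ↔ ∀ i, y i ∈ G.nonAdjFinset S := by
    refine ⟨fun h i => mem_nonAdjFinset.2 fun s hs hsy => ?_, fun h => hC.mono ?_⟩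
    · exact h (Or.inl hs) (Or.inr ⟨i, rfl⟩) (G.ne_of_adj hsy) hsy
    · exact Set.union_subset (subset_nonAdjFinset hS) (Set.range_subset_iff.2 h)
  rw [indepExtCount, Nat.card_congr ((Equiv.subtypeEquivRight key).trans Equiv.subtypePiEquivPi),
    Nat.card_fun]
  simp

end indepExtCount

end SimpleGraph

open SimpleGraph

def clebschTranslate (a : ClebschVert) : Clebsch ≃g Clebsch where
  toFun x := ⟨x.1 + a.1, by simp [sum_add_distrib, x.2, a.2]⟩
  invFun x := ⟨x.1 + a.1, by simp [sum_add_distrib, x.2, a.2]⟩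
  left_inv x := Subtype.ext (by simp [add_assoc, CharTwo.add_self_eq_zero])
  right_inv x := Subtype.ext (by simp [add_assoc, CharTwo.add_self_eq_zero])
  map_rel_iff' {x y} := by
    change hammingDist (fun i => x.1 i + a.1 i) (fun i => y.1 i + a.1 i) = 4 ↔ _
    rw [hammingDist_comp (fun i => (· + a.1 i)) fun i => add_left_injective _]
    rfl

theorem clebsch_exists_iso_apply_zero (v : ClebschVert) :
    ∃ σ : Clebsch ≃g Clebsch, σ (cv 0 0 0 0 0) = v :=
  ⟨clebschTranslate v, Subtype.ext <| funext fun i => by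
    fin_cases i <;> simp [clebschTranslate, cv, Matrix.vecHead, Matrix.vecTail]⟩

theorem card_clebschVert : Fintype.card ClebschVert = 16 := by decide

theorem clebsch_card_nonAdjFinset_singleton_sdiff :
    #(Clebsch.nonAdjFinset {cv 0 0 0 0 0} \ {cv 0 0 0 0 0}) = 10 := by
  decide +kernel

theorem clebsch_card_nonAdjFinset_pair_sdiff :
    ∀ b ∈ Clebsch.nonAdjFinset {cv 0 0 0 0 0} \ {cv 0 0 0 0 0},
      #(Clebsch.nonAdjFinset {b, cv 0 0 0 0 0} \ {b, cv 0 0 0 0 0}) = 6 := by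
  decide +kernel

theorem clebsch_card_nonAdjFinset_insert_triple :
    ∀ b ∈ Clebsch.nonAdjFinset {cv 0 0 0 0 0} \ {cv 0 0 0 0 0},
    ∀ c ∈ Clebsch.nonAdjFinset {b, cv 0 0 0 0 0} \ {b, cv 0 0 0 0 0},
      (Clebsch.nonAdjFinset {c, b, cv 0 0 0 0 0} \ {c, b, cv 0 0 0 0 0}).val.map
        (fun d => #(Clebsch.nonAdjFinset {d, c, b, cv 0 0 0 0 0})) = {4, 5, 5} := by
  decide +kernel

theorem clebsch_isIndepSet_singleton :
    Clebsch.IsIndepSet ↑({cv 0 0 0 0 0} : Finset ClebschVert) := by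
  simp

theorem clebsch_indepExtCount_triple {b c : ClebschVert}
    (hb : b ∈ Clebsch.nonAdjFinset {cv 0 0 0 0 0} \ {cv 0 0 0 0 0})
    (hc : c ∈ Clebsch.nonAdjFinset {b, cv 0 0 0 0 0} \ {b, cv 0 0 0 0 0}) (m : ℕ) :
    (Clebsch.indepExtCount {c, b, cv 0 0 0 0 0} m : ℤ) = 5 ^ m + 4 ^ m - 3 ^ m := by
  have hext := clebsch_card_nonAdjFinset_insert_triple b hb c hc
  set S : Finset ClebschVert := {c, b, cv 0 0 0 0 0}
  rw [mem_sdiff] at hb hc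
  have hS : Clebsch.IsIndepSet ↑S := (clebsch_isIndepSet_singleton.insert_of_mem_nonAdjFinset
    hb.1).insert_of_mem_nonAdjFinset hc.1
  have hcard : #S = 3 := by
    rw [card_insert_of_notMem hc.2, card_insert_of_notMem hb.2, card_singleton]
  have hpow (d) (hd : d ∈ Clebsch.nonAdjFinset S \ S) (m : ℕ) :
      Clebsch.indepExtCount (insert d S) m = #(Clebsch.nonAdjFinset (insert d S)) ^ m := by
    have hT := hS.insert_of_mem_nonAdjFinset (mem_sdiff.1 hd).1
    -- the counts `4, 5, 5` are at most `#(insert d S) + 1 = 5`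
    refine indepExtCount_eq_pow hT (isIndepSet_nonAdjFinset hT ?_) m
    have := hext ▸ Multiset.mem_map_of_mem (fun d => #(Clebsch.nonAdjFinset (insert d S))) hd
    rw [card_insert_of_notMem (mem_sdiff.1 hd).2, hcard]
    simp only [Multiset.insert_eq_cons, Multiset.mem_cons, Multiset.mem_singleton, or_self] at this
    omega
  have hsum (m : ℕ) : ∑ d ∈ Clebsch.nonAdjFinset S \ S, Clebsch.indepExtCount (insert d S) m =
      4 ^ m + 5 ^ m + 5 ^ m := by
    have := congrArg (fun s : Multiset ℕ => (s.map (· ^ m)).sum) hext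
    simp only [Multiset.map_map, Function.comp_def] at this
    rw [sum_congr rfl fun d hd => hpow d hd m, sum_eq_multiset_sum, this]
    simp [add_assoc]
  induction m with
  | zero => simp [indepExtCount_zero hS]
  | succ m ih =>
    rw [indepExtCount_succ_eq_sum_nonAdjFinset, hsum, hcard]
    push_cast
    rw [ih]
    ring

theorem clebsch_indepExtCount_pair {b : ClebschVert}
    (hb : b ∈ Clebsch.nonAdjFinset {cv 0 0 0 0 0} \ {cv 0 0 0 0 0}) (m : ℕ) :
    (Clebsch.indepExtCount {b, cv 0 0 0 0 0} m : ℤ) =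
      2 * 5 ^ m + 3 * 4 ^ m - 6 * 3 ^ m + 2 * 2 ^ m := by
  have hS := clebsch_isIndepSet_singleton.insert_of_mem_nonAdjFinset (mem_sdiff.1 hb).1
  have hcard : #{b, cv 0 0 0 0 0} = 2 := by
    rw [card_insert_of_notMem (mem_sdiff.1 hb).2, card_singleton]
  induction m with
  | zero => simp [indepExtCount_zero hS]
  | succ m ih =>
    rw [indepExtCount_succ_eq_sum_nonAdjFinset, hcard]
    push_cast
    rw [sum_congr rfl fun c hc => clebsch_indepExtCount_triple hb hc m, sum_const,
      clebsch_card_nonAdjFinset_pair_sdiff b hb, ih, nsmul_eq_mul]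
    ring

theorem clebsch_indepExtCount_singleton (m : ℕ) :
    (Clebsch.indepExtCount {cv 0 0 0 0 0} m : ℤ) =
      5 * 5 ^ m + 10 * 4 ^ m - 30 * 3 ^ m + 20 * 2 ^ m - 4 := by
  induction m with
  | zero => simp [indepExtCount_zero clebsch_isIndepSet_singleton]
  | succ m ih =>
    rw [indepExtCount_succ_eq_sum_nonAdjFinset, card_singleton]
    push_cast
    rw [sum_congr rfl fun b hb => clebsch_indepExtCount_pair hb m, sum_const,
      clebsch_card_nonAdjFinset_singleton_sdiff, ih, nsmul_eq_mul]
    ring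

/-- If k ≥ 1 vertices are chosen independently and uniformly at random from the 16 vertices of
the Clebsch graph, the probability that they induce no edge equals
(5·5^(k-1) + 10·4^(k-1) − 30·3^(k-1) + 20·2^(k-1) − 4)/16^(k-1). -/
theorem clebsch_no_edge_probability (k : ℕ) (hk : 1 ≤ k) :
    ((Finset.univ.filter fun x : Fin k → ClebschVert =>
        ∀ a b : Fin k, ¬ Clebsch.Adj (x a) (x b)).card : ℚ) / 16 ^ k =
      (5 * 5 ^ (k - 1) + 10 * 4 ^ (k - 1) - 30 * 3 ^ (k - 1) + 20 * 2 ^ (k - 1) - 4) /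
        16 ^ (k - 1) := by
  obtain ⟨m, rfl⟩ := Nat.exists_eq_add_of_le' hk
  have h : (Clebsch.indepExtCount {cv 0 0 0 0 0} m : ℚ) =
      5 * 5 ^ m + 10 * 4 ^ m - 30 * 3 ^ m + 20 * 2 ^ m - 4 := by
    exact_mod_cast clebsch_indepExtCount_singleton m
  rw [card_filter_forall_not_adj, indepExtCount_empty_succ clebsch_exists_iso_apply_zero,
    card_clebschVert, Nat.add_sub_cancel, Nat.cast_mul, h]
  field_simp
  ring
end

section
/- Let G be a graph of order n with P(K_k, G) minimal among all graphs of order n with independence number less than l (assuming such graphs exist). Then for any two vertices x, y of G, the numbers of k-cliques through x and through y differ by at most binomial(n−2, k−2). -/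
open Finset

variable {V : Type*}

/-- Replace `x` by a clone of `y` (adjacent to `y` and to all of `y`'s neighbours). -/
def cloneGraph (G : SimpleGraph V) (x y : V) : SimpleGraph V where
  Adj u v := u ≠ v ∧ ((u ≠ x ∧ v ≠ x ∧ G.Adj u v) ∨ (u = x ∧ (v = y ∨ G.Adj y v)) ∨
    (v = x ∧ (u = y ∨ G.Adj u y)))
  symm := ⟨by
    rintro u v ⟨huv, h⟩
    refine ⟨huv.symm, ?_⟩
    rcases h with ⟨h1, h2, h3⟩ | h | h
    · exact Or.inl ⟨h2, h1, h3.symm⟩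
    · exact Or.inr (Or.inr ⟨h.1, h.2.imp id SimpleGraph.Adj.symm⟩)
    · exact Or.inr (Or.inl ⟨h.1, h.2.imp id SimpleGraph.Adj.symm⟩)⟩
  loopless := ⟨fun u h => h.1 rfl⟩

lemma clone_adj_ne {G : SimpleGraph V} {x y u v : V} (hu : u ≠ x) (hv : v ≠ x) :
    (cloneGraph G x y).Adj u v ↔ G.Adj u v := by
  constructor
  · rintro ⟨huv, ⟨_, _, h⟩ | ⟨h, _⟩ | ⟨h, _⟩⟩
    · exact h
    · exact absurd h hu
    · exact absurd h hv
  · exact fun h => ⟨h.ne, Or.inl ⟨hu, hv, h⟩⟩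

lemma clone_adj_x {G : SimpleGraph V} {x y v : V} (hxy : x ≠ y) (hv : v ≠ x) :
    (cloneGraph G x y).Adj x v ↔ (v = y ∨ G.Adj y v) := by
  constructor
  · rintro ⟨huv, ⟨h, _⟩ | ⟨_, h⟩ | ⟨h, _⟩⟩
    · exact absurd rfl h
    · exact h
    · exact absurd h hv
  · rintro h
    refine ⟨?_, Or.inr (Or.inl ⟨rfl, h⟩)⟩
    rcases h with rfl | h
    · exact hxy
    · exact fun e => hv e.symm

lemma ne_of_coe_mem_not_mem {s : Finset V} {u x : V}
    (hu : u ∈ (s : Set V)) (hx : x ∉ s) : u ≠ x :=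
  fun e => hx (e ▸ Finset.mem_coe.mp hu)

lemma clone_compl_cliqueFree [DecidableEq V] {G : SimpleGraph V} {x y : V} {l : ℕ}
    (hxy : x ≠ y) (hG : Gᶜ.CliqueFree l) : (cloneGraph G x y)ᶜ.CliqueFree l := by
  intro t ht
  rw [SimpleGraph.isNClique_iff, SimpleGraph.isClique_iff] at ht
  obtain ⟨htc, htcard⟩ := ht
  by_cases hx : x ∈ t
  · have hy : y ∉ t := by
      intro hy
      have h := htc (Finset.mem_coe.mpr hx) (Finset.mem_coe.mpr hy) hxy
      rw [SimpleGraph.compl_adj] at h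
      exact h.2 ((clone_adj_x hxy hxy.symm).mpr (Or.inl rfl))
    have hyx : y ∉ t.erase x := fun h => hy (Finset.mem_of_mem_erase h)
    have hl : 1 ≤ l := htcard ▸ Finset.card_pos.mpr ⟨x, hx⟩
    apply hG (insert y (t.erase x))
    rw [SimpleGraph.isNClique_iff, SimpleGraph.isClique_iff]
    constructor
    · intro u hu v hv huv
      simp only [Finset.coe_insert, Set.mem_insert_iff, Finset.mem_coe] at hu hv
      rw [SimpleGraph.compl_adj]
      refine ⟨huv, ?_⟩
      rcases hu with rfl | hu
      · rcases hv with rfl | hv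
        · exact absurd rfl huv
        · intro hadj
          have hvt := Finset.mem_of_mem_erase hv
          have hvx : v ≠ x := Finset.ne_of_mem_erase hv
          have h := htc (Finset.mem_coe.mpr hx) (Finset.mem_coe.mpr hvt) (Ne.symm hvx)
          rw [SimpleGraph.compl_adj] at h
          exact h.2 ((clone_adj_x hxy hvx).mpr (Or.inr hadj))
      · rcases hv with rfl | hv
        · intro hadj
          have hut := Finset.mem_of_mem_erase hu
          have hux : u ≠ x := Finset.ne_of_mem_erase hu
          have h := htc (Finset.mem_coe.mpr hx) (Finset.mem_coe.mpr hut) (Ne.symm hux)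
          rw [SimpleGraph.compl_adj] at h
          exact h.2 ((clone_adj_x hxy hux).mpr (Or.inr hadj.symm))
        · intro hadj
          have h := htc (Finset.mem_coe.mpr (Finset.mem_of_mem_erase hu))
            (Finset.mem_coe.mpr (Finset.mem_of_mem_erase hv)) huv
          rw [SimpleGraph.compl_adj] at h
          exact h.2 ((clone_adj_ne (Finset.ne_of_mem_erase hu)
            (Finset.ne_of_mem_erase hv)).mpr hadj)
    · rw [Finset.card_insert_of_notMem hyx, Finset.card_erase_of_mem hx, htcard]
      omega
  · apply hG t
    rw [SimpleGraph.isNClique_iff, SimpleGraph.isClique_iff]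
    refine ⟨?_, htcard⟩
    intro u hu v hv huv
    have h := htc hu hv huv
    rw [SimpleGraph.compl_adj] at h ⊢
    refine ⟨huv, fun hadj => h.2 ?_⟩
    exact (clone_adj_ne (ne_of_coe_mem_not_mem hu hx)
      (ne_of_coe_mem_not_mem hv hx)).mpr hadj

set_option maxHeartbeats 1000000 in
/-- In a graph on n vertices minimising the number of k-cliques among all graphs with
independence number less than l (i.e. whose complement is K_l-free), the numbers of
k-cliques through any two vertices differ by at most choose(n−2, k−2). -/
theorem extremal_clique_counts_almost_regular (n k l : ℕ) (G : SimpleGraph (Fin n))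
    (hG : Gᶜ.CliqueFree l)
    (hmin : ∀ H : SimpleGraph (Fin n), Hᶜ.CliqueFree l →
      Nat.card {s : Finset (Fin n) // G.IsNClique k s} ≤
        Nat.card {s : Finset (Fin n) // H.IsNClique k s})
    (x y : Fin n) :
    Nat.card {s : Finset (Fin n) // G.IsNClique k s ∧ x ∈ s} ≤
      Nat.card {s : Finset (Fin n) // G.IsNClique k s ∧ y ∈ s} + (n - 2).choose (k - 2) := by
  classical
  by_cases hxy : x = y
  · subst hxy; exact Nat.le_add_right _ _
  set H := cloneGraph G x y with hH
  have split : ∀ (P Q : Finset (Fin n) → Prop),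
      Nat.card {s : Finset (Fin n) // P s} = Nat.card {s : Finset (Fin n) // P s ∧ Q s} +
        Nat.card {s : Finset (Fin n) // P s ∧ ¬ Q s} := by
    intro P Q
    rw [Nat.card_eq_fintype_card, Nat.card_eq_fintype_card, Nat.card_eq_fintype_card,
      Fintype.card_subtype, Fintype.card_subtype, Fintype.card_subtype,
      ← Finset.filter_filter, ← Finset.filter_filter]
    exact (Finset.card_filter_add_card_filter_not Q).symm
  have hHfree : Hᶜ.CliqueFree l := clone_compl_cliqueFree hxy hG
  have hmin' := hmin H hHfree
  -- cliques avoiding x are the same in G and H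
  have e3' : Nat.card {s : Finset (Fin n) // H.IsNClique k s ∧ ¬ x ∈ s} =
      Nat.card {s : Finset (Fin n) // G.IsNClique k s ∧ ¬ x ∈ s} := by
    apply Nat.card_congr
    apply Equiv.subtypeEquivRight
    intro s
    have key : x ∉ s → (H.IsNClique k s ↔ G.IsNClique k s) := by
      intro hx
      rw [SimpleGraph.isNClique_iff, SimpleGraph.isNClique_iff,
        SimpleGraph.isClique_iff, SimpleGraph.isClique_iff]
      constructor <;> rintro ⟨hc, hcard⟩ <;> refine ⟨fun u hu v hv huv => ?_, hcard⟩
      · exact (clone_adj_ne (ne_of_coe_mem_not_mem hu hx)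
          (ne_of_coe_mem_not_mem hv hx)).mp (hc hu hv huv)
      · exact (clone_adj_ne (ne_of_coe_mem_not_mem hu hx)
          (ne_of_coe_mem_not_mem hv hx)).mpr (hc hu hv huv)
    exact ⟨fun ⟨h1, h2⟩ => ⟨(key h2).mp h1, h2⟩, fun ⟨h1, h2⟩ => ⟨(key h2).mpr h1, h2⟩⟩
  -- cliques of H through both x and y are few
  have e4 : Nat.card {s : Finset (Fin n) // (H.IsNClique k s ∧ x ∈ s) ∧ y ∈ s} ≤
      (n - 2).choose (k - 2) := by
    rw [Nat.card_eq_fintype_card, Fintype.card_subtype]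
    have hpc : ((((univ : Finset (Fin n)).erase x).erase y).powersetCard (k - 2)).card =
        (n - 2).choose (k - 2) := by
      rw [Finset.card_powersetCard,
        Finset.card_erase_of_mem (Finset.mem_erase.mpr ⟨Ne.symm hxy, Finset.mem_univ y⟩),
        Finset.card_erase_of_mem (Finset.mem_univ x), Finset.card_univ, Fintype.card_fin]
      congr 1
    rw [← hpc]
    apply Finset.card_le_card_of_injOn (fun s => (s.erase x).erase y)
    · intro s hs
      simp only [Finset.coe_filter, Set.mem_setOf_eq, Finset.mem_filter, Finset.mem_univ, true_and] at hs
      obtain ⟨⟨hcl, hxs⟩, hys⟩ := hs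
      rw [Finset.mem_coe, Finset.mem_powersetCard]
      refine ⟨Finset.erase_subset_erase y (Finset.erase_subset_erase x (Finset.subset_univ s)), ?_⟩
      rw [Finset.card_erase_of_mem (Finset.mem_erase.mpr ⟨Ne.symm hxy, hys⟩),
        Finset.card_erase_of_mem hxs, hcl.card_eq]
      omega
    · intro s1 h1 s2 h2 he
      simp only [Finset.coe_filter, Set.mem_setOf_eq, Finset.mem_univ, true_and] at h1 h2
      obtain ⟨⟨_, hx1⟩, hy1⟩ := h1
      obtain ⟨⟨_, hx2⟩, hy2⟩ := h2
      have r : ∀ s : Finset (Fin n), x ∈ s → y ∈ s →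
          insert x (insert y ((s.erase x).erase y)) = s := by
        intro s hxs hys
        rw [Finset.insert_erase (Finset.mem_erase.mpr ⟨Ne.symm hxy, hys⟩), Finset.insert_erase hxs]
      have he' : (s1.erase x).erase y = (s2.erase x).erase y := he
      rw [← r s1 hx1 hy1, ← r s2 hx2 hy2, he']
  -- cliques of H through x but not y inject into cliques of G through y
  have e5 : Nat.card {s : Finset (Fin n) // (H.IsNClique k s ∧ x ∈ s) ∧ ¬ y ∈ s} ≤
      Nat.card {s : Finset (Fin n) // G.IsNClique k s ∧ y ∈ s} := by
    rw [Nat.card_eq_fintype_card, Fintype.card_subtype,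
      Nat.card_eq_fintype_card, Fintype.card_subtype]
    apply Finset.card_le_card_of_injOn (fun s => insert y (s.erase x))
    · intro s hs
      simp only [Finset.coe_filter, Set.mem_setOf_eq, Finset.mem_coe, Finset.mem_filter, Finset.mem_univ, true_and] at hs ⊢
      obtain ⟨⟨hcl, hxs⟩, hys⟩ := hs
      have hyx : y ∉ s.erase x := fun h => hys (Finset.mem_of_mem_erase h)
      refine ⟨?_, Finset.mem_insert_self y _⟩
      have hclc := hcl.1
      rw [SimpleGraph.isClique_iff] at hclc
      rw [SimpleGraph.isNClique_iff, SimpleGraph.isClique_iff]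
      constructor
      · intro u hu v hv huv
        simp only [Finset.coe_insert, Set.mem_insert_iff, Finset.mem_coe] at hu hv
        rcases hu with rfl | hu
        · rcases hv with rfl | hv
          · exact absurd rfl huv
          · have hvx : v ≠ x := Finset.ne_of_mem_erase hv
            have hvt := Finset.mem_of_mem_erase hv
            have hadj := hclc (Finset.mem_coe.mpr hxs) (Finset.mem_coe.mpr hvt) (Ne.symm hvx)
            rcases (clone_adj_x hxy hvx).mp hadj with rfl | h
            · exact absurd hvt hys
            · exact h
        · rcases hv with rfl | hv
          · have hux : u ≠ x := Finset.ne_of_mem_erase hu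
            have hut := Finset.mem_of_mem_erase hu
            have hadj := hclc (Finset.mem_coe.mpr hxs) (Finset.mem_coe.mpr hut) (Ne.symm hux)
            rcases (clone_adj_x hxy hux).mp hadj with rfl | h
            · exact absurd hut hys
            · exact h.symm
          · exact (clone_adj_ne (Finset.ne_of_mem_erase hu) (Finset.ne_of_mem_erase hv)).mp
              (hclc (Finset.mem_coe.mpr (Finset.mem_of_mem_erase hu))
                (Finset.mem_coe.mpr (Finset.mem_of_mem_erase hv)) huv)
      · rw [Finset.card_insert_of_notMem hyx, Finset.card_erase_of_mem hxs, hcl.card_eq]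
        have hk : 1 ≤ k := hcl.card_eq ▸ Finset.card_pos.mpr ⟨x, hxs⟩
        omega
    · intro s1 h1 s2 h2 he
      simp only [Finset.coe_filter, Set.mem_setOf_eq, Finset.mem_univ, true_and] at h1 h2
      obtain ⟨⟨_, hx1⟩, hy1⟩ := h1
      obtain ⟨⟨_, hx2⟩, hy2⟩ := h2
      have r : ∀ s : Finset (Fin n), x ∈ s → y ∉ s →
          insert x ((insert y (s.erase x)).erase y) = s := by
        intro s hxs hys
        rw [Finset.erase_insert (fun h => hys (Finset.mem_of_mem_erase h)),
          Finset.insert_erase hxs]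
      have he' : insert y (s1.erase x) = insert y (s2.erase x) := he
      rw [← r s1 hx1 hy1, ← r s2 hx2 hy2, he']
  have t1 : Nat.card {s : Finset (Fin n) // G.IsNClique k s} =
      Nat.card {s : Finset (Fin n) // G.IsNClique k s ∧ x ∈ s} +
      Nat.card {s : Finset (Fin n) // G.IsNClique k s ∧ ¬ x ∈ s} := split _ _
  have t2 : Nat.card {s : Finset (Fin n) // H.IsNClique k s} =
      Nat.card {s : Finset (Fin n) // H.IsNClique k s ∧ x ∈ s} +
      Nat.card {s : Finset (Fin n) // H.IsNClique k s ∧ ¬ x ∈ s} := split _ _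
  have t3 : Nat.card {s : Finset (Fin n) // H.IsNClique k s ∧ x ∈ s} =
      Nat.card {s : Finset (Fin n) // (H.IsNClique k s ∧ x ∈ s) ∧ y ∈ s} +
      Nat.card {s : Finset (Fin n) // (H.IsNClique k s ∧ x ∈ s) ∧ ¬ y ∈ s} := split _ _
  omega
end
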